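/- Let i₁ : ℤ → G be a group homomorphism into an abelian group G with kernel aℤ for some integer a ≥ 2, and suppose G is generated by im(i₁) together with the image of another homomorphism i₂ : ℤ → G, and G/im(i₁) ≅ ℤ. Then G ≅ ℤ ⊕ ℤ/aℤ and the kernel of k = i₁ ⊕ i₂ : ℤ ⊕ ℤ → G is infinite cyclic. -/

import Mathlib

/-!
Since `G ⧸ im i₁ ≅ ℤ` is free, the extension `im i₁ → G → ℤ` splits, so `G ≅ im i₁ × ℤ`, and
`im i₁ ≅ ℤ ⧸ aℤ`. For the projection `q : G → ℤ` we have `q ∘ i₁ = 0`, and `q ∘ i₂` is onto because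
the two images generate `G`; a surjective endomorphism of `ℤ` is injective, so `(m, n) ∈ ker k`
forces `n = 0` and `m ∈ aℤ`, whence `ker k ≅ aℤ ≅ ℤ`.
-/

open Function

namespace AddSubgroup

variable {G : Type*} [AddCommGroup G]

theorem nonempty_addEquiv_prod_int_of_quotient (H : AddSubgroup G) (e : G ⧸ H ≃+ ℤ) :
    Nonempty (G ≃+ H × ℤ) := by
  set q : G →+ ℤ := e.toAddMonoidHom.comp (QuotientAddGroup.mk' H)
  have hexact : Exact H.subtype.toIntLinearMap q.toIntLinearMap := fun x ↦ by simp [q]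
  obtain ⟨g, hg⟩ : ∃ g, q g = 1 := (e.surjective.comp (QuotientAddGroup.mk'_surjective H)) 1
  have hsection : q.toIntLinearMap ∘ₗ LinearMap.toSpanSingleton ℤ G g = .id :=
    LinearMap.ext_ring (by simpa using hg)
  exact ⟨(hexact.splitSurjectiveEquiv H.subtype_injective ⟨_, hsection⟩).1.toAddEquiv⟩

theorem nonempty_zmultiples_addEquiv_int {a : ℤ} (ha : a ≠ 0) : Nonempty (zmultiples a ≃+ ℤ) :=
  ⟨(AddMonoidHom.ofInjective (f := zmultiplesHom ℤ a) fun m n h ↦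
    mul_right_cancel₀ ha (by simpa using h)).symm⟩

end AddSubgroup

namespace AddMonoidHom

variable {A B G H : Type*} [AddCommGroup A] [AddCommGroup B] [AddCommGroup G] [AddCommGroup H]

theorem ker_coprod_eq_prod_bot (i₁ : A →+ G) (i₂ : B →+ G) (q : G →+ H) (h₁ : q.comp i₁ = 0)
    (h₂ : Injective (q.comp i₂)) : (i₁.coprod i₂).ker = i₁.ker.prod ⊥ := by
  ext ⟨m, n⟩
  simp only [mem_ker, coprod_apply, AddSubgroup.mem_prod, AddSubgroup.mem_bot]
  constructor
  · intro h
    have hqm : q (i₁ m) = 0 := DFunLike.congr_fun h₁ m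
    have hn : n = 0 := h₂ <| by simpa [hqm] using congrArg q h
    exact ⟨by simpa [hn] using h, hn⟩
  · rintro ⟨hm, rfl⟩
    simp [hm]

theorem surjective_comp_of_sup_range_eq_top {i₁ : A →+ G} {i₂ : B →+ G} {q : G →+ H}
    (hgen : i₁.range ⊔ i₂.range = ⊤) (h₁ : q.comp i₁ = 0) (hq : Surjective q) :
    Surjective (q.comp i₂) := by
  rw [← range_eq_top, range_comp, ← bot_sup_eq (AddSubgroup.map q _), ← range_eq_bot_iff.2 h₁,
    range_comp, ← AddSubgroup.map_sup, hgen, ← range_eq_map, range_eq_top.2 hq]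

theorem injective_of_surjective_int (f : ℤ →+ ℤ) (hf : Surjective f) : Injective f :=
  IsNoetherian.injective_of_surjective_endomorphism f.toIntLinearMap hf

end AddMonoidHom

/-- Let `i₁ : ℤ → G` be a homomorphism into an abelian group `G` with kernel
`aℤ` for some `a ≥ 2`, suppose `G` is generated by `im(i₁)` together with the image of another
homomorphism `i₂ : ℤ → G`, and `G/im(i₁) ≅ ℤ`.  Then `G ≅ ℤ ⊕ ℤ/aℤ` and the kernel of
`k = i₁ ⊕ i₂ : ℤ ⊕ ℤ → G` is infinite cyclic. -/
theorem stmt5 {G : Type*} [AddCommGroup G] (i₁ i₂ : ℤ →+ G) (a : ℕ) (ha : 2 ≤ a)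
    (hker : i₁.ker = AddSubgroup.zmultiples (a : ℤ))
    (hgen : i₁.range ⊔ i₂.range = (⊤ : AddSubgroup G))
    (hquot : Nonempty ((G ⧸ i₁.range) ≃+ ℤ)) :
    Nonempty (G ≃+ ℤ × ZMod a) ∧ Nonempty ((i₁.coprod i₂).ker ≃+ ℤ) := by
  obtain ⟨e⟩ := hquot
  set q : G →+ ℤ := e.toAddMonoidHom.comp (QuotientAddGroup.mk' i₁.range)
  have hq : Surjective q := e.surjective.comp (QuotientAddGroup.mk'_surjective _)
  have hq₁ : q.comp i₁ = 0 := by ext; simp [q]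
  have hq₂ : Injective (q.comp i₂) := AddMonoidHom.injective_of_surjective_int _ <|
    AddMonoidHom.surjective_comp_of_sup_range_eq_top hgen hq₁ hq
  obtain ⟨φ⟩ := i₁.range.nonempty_addEquiv_prod_int_of_quotient e
  have hrange : i₁.range ≃+ ZMod a :=
    (QuotientAddGroup.quotientKerEquivRange i₁).symm.trans <|
      (QuotientAddGroup.quotientAddEquivOfEq hker).trans (Int.quotientZMultiplesNatEquivZMod a)
  obtain ⟨ψ⟩ := AddSubgroup.nonempty_zmultiples_addEquiv_int (a := a) (by omega)
  refine ⟨⟨(φ.trans (hrange.prodCongr (.refl ℤ))).trans AddEquiv.prodComm⟩, ⟨?_⟩⟩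
  rw [AddMonoidHom.ker_coprod_eq_prod_bot i₁ i₂ q hq₁ hq₂, hker]
  exact ((AddSubgroup.prodEquiv _ ⊥).trans AddEquiv.prodUnique).trans ψ
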